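/- arXiv:1604.02934 — 2 statements merged into one kernel-verified Lean document; each statement's English description precedes it below -/
import Mathlib

section
/- Let c : V → V → ℝ be symmetric and satisfy the triangle inequality, let d, a ∈ V be the depots and let i, j be two distinct customers. Then every walk from d to a that visits both i and j has cost at least min( c(d,i) + c(i,j) + c(j,a), c(d,j) + c(j,i) + c(i,a) ). Consequently, if this minimum (the length MinLen({i,j}) of the shortest d–a path through both i and j) exceeds L, then no single tour of travel cost at most L can serve both i and j, i.e. the pair {i, j} is an edge of the incompatibility graph between customers. -/
lemma seg_bound {V : Type*} (c : V → V → ℝ)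
    (htri : ∀ x y z : V, c x z ≤ c x y + c y z) (w : ℕ → V) :
    ∀ t s, s < t → c (w s) (w t) ≤ ∑ u ∈ Finset.Ico s t, c (w u) (w (u + 1)) := by
  intro t
  induction t with
  | zero => intro s hs; omega
  | succ t ih =>
    intro s hs
    rcases eq_or_lt_of_le (Nat.lt_succ_iff.mp hs) with h | h
    · subst h
      simp
    · rw [Finset.sum_Ico_succ_top (le_of_lt h)]
      calc c (w s) (w (t + 1)) ≤ c (w s) (w t) + c (w t) (w (t + 1)) := htri _ _ _
        _ ≤ (∑ u ∈ Finset.Ico s t, c (w u) (w (u + 1))) + c (w t) (w (t + 1)) := by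
          linarith [ih s h]

/- STATEMENT 3: every d–a walk visiting two distinct customers i and j costs at least
   MinLen({i,j}) = min (c d i + c i j + c j a) (c d j + c j i + c i a); hence if this
   exceeds L, the customers i and j are incompatible. -/
theorem stmt_3 {V : Type*} (c : V → V → ℝ)
    (hsym : ∀ x y : V, c x y = c y x)
    (htri : ∀ x y z : V, c x z ≤ c x y + c y z)
    (d a i j : V) (hij : i ≠ j)
    (hid : i ≠ d) (hia : i ≠ a) (hjd : j ≠ d) (hja : j ≠ a) (L : ℝ)
    (k : ℕ) (w : ℕ → V) (hd : w 0 = d) (ha : w k = a)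
    (hi : ∃ t ≤ k, w t = i) (hj : ∃ t ≤ k, w t = j) :
    (min (c d i + c i j + c j a) (c d j + c j i + c i a) ≤
        ∑ t ∈ Finset.range k, c (w t) (w (t + 1))) ∧
      (L < min (c d i + c i j + c j a) (c d j + c j i + c i a) →
        ¬ (∑ t ∈ Finset.range k, c (w t) (w (t + 1)) ≤ L)) := by
  obtain ⟨ti, hti, hwi⟩ := hi
  obtain ⟨tj, htj, hwj⟩ := hj
  have hmain : min (c d i + c i j + c j a) (c d j + c j i + c i a) ≤
      ∑ t ∈ Finset.range k, c (w t) (w (t + 1)) := by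
    have hne : ti ≠ tj := by rintro rfl; exact hij (hwi ▸ hwj ▸ rfl)
    have key : ∀ s t : ℕ, s < t → t < k → 0 < s →
        c (w 0) (w s) + c (w s) (w t) + c (w t) (w k) ≤
          ∑ u ∈ Finset.range k, c (w u) (w (u + 1)) := by
      intro s t hst htk hs
      have h1 := seg_bound c htri w s 0 hs
      have h2 := seg_bound c htri w t s hst
      have h3 := seg_bound c htri w k t htk
      have hsplit : ∑ u ∈ Finset.range k, c (w u) (w (u + 1)) =
          (∑ u ∈ Finset.Ico 0 s, c (w u) (w (u + 1))) +
          (∑ u ∈ Finset.Ico s t, c (w u) (w (u + 1))) +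
          (∑ u ∈ Finset.Ico t k, c (w u) (w (u + 1))) := by
        rw [Finset.range_eq_Ico,
            ← Finset.sum_Ico_consecutive _ (Nat.zero_le s)
              (le_trans (le_of_lt hst) (le_of_lt htk)),
            ← Finset.sum_Ico_consecutive _ (le_of_lt hst) (le_of_lt htk)]
        ring
      rw [hsplit]; linarith
    rcases lt_or_gt_of_ne hne with h | h
    · -- i before j
      have hti0 : 0 < ti := by
        rcases Nat.eq_zero_or_pos ti with h0 | h0
        · exact absurd (by rw [← hwi, h0, hd]) hid
        · exact h0
      have htjk : tj < k := by
        rcases eq_or_lt_of_le htj with h0 | h0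
        · exact absurd (by rw [← hwj, h0, ha]) hja
        · exact h0
      have := key ti tj h htjk hti0
      rw [hd, hwi, hwj, ha] at this
      exact le_trans (min_le_left _ _) this
    · have htj0 : 0 < tj := by
        rcases Nat.eq_zero_or_pos tj with h0 | h0
        · exact absurd (by rw [← hwj, h0, hd]) hjd
        · exact h0
      have htik : ti < k := by
        rcases eq_or_lt_of_le hti with h0 | h0
        · exact absurd (by rw [← hwi, h0, ha]) hia
        · exact h0
      have := key tj ti h htik htj0
      rw [hd, hwi, hwj, ha] at this
      exact le_trans (min_le_right _ _) this
  exact ⟨hmain, fun h hle => absurd (le_trans hmain hle) (not_le.mpr h)⟩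
end

section
/- Let V be a finite type, let d and a be two distinct vertices of V, and let E ⊆ V × V be a set of arcs such that: no arc of E enters d and no arc of E leaves a; exactly one arc of E leaves d and exactly one arc of E enters a; and every vertex v ∉ {d, a} either is incident to no arc of E, or has exactly one incoming arc and exactly one outgoing arc in E. If E contains no directed cycle, then E is the arc set of a single directed path from d to a: there exist k ≥ 1 and pairwise distinct vertices d = v₀, v₁, …, v_k = a with E = { (v_i, v_{i+1}) : i < k }. -/
/- STATEMENT 14: an acyclic arc set satisfying the TOP degree constraints (one arc out
   of d, one arc into a, no arc into d or out of a, and every other vertex either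
   isolated or with in-degree = out-degree = 1) is the arc set of a single directed
   path from d to a with pairwise distinct vertices. -/
theorem stmt_14 {V : Type*} [Fintype V] (d a : V) (hda : d ≠ a)
    (E : Set (V × V))
    (hd_in : ∀ x : V, (x, d) ∉ E)
    (ha_out : ∀ x : V, (a, x) ∉ E)
    (hd_out : ∃! x : V, (d, x) ∈ E)
    (ha_in : ∃! x : V, (x, a) ∈ E)
    (hdeg : ∀ x : V, x ≠ d → x ≠ a →
      ((∀ y : V, (y, x) ∉ E ∧ (x, y) ∉ E) ∨
        ((∃! y : V, (y, x) ∈ E) ∧ (∃! y : V, (x, y) ∈ E))))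
    (hacyclic : ¬ ∃ (t : ℕ) (w : ℕ → V), 1 ≤ t ∧ w t = w 0 ∧
      ∀ i < t, (w i, w (i + 1)) ∈ E) :
    ∃ (k : ℕ) (v : ℕ → V), 1 ≤ k ∧ v 0 = d ∧ v k = a ∧
      (∀ i ≤ k, ∀ j ≤ k, v i = v j → i = j) ∧
      E = {p : V × V | ∃ i < k, p = (v i, v (i + 1))} := by
  classical
  set f : V → V := fun x => if h : ∃ y, (x, y) ∈ E then h.choose else d with hfdef
  have hfE : ∀ x, (∃ y, (x, y) ∈ E) → (x, f x) ∈ E := fun x h => by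
    simp only [hfdef, dif_pos h]; exact h.choose_spec
  set v : ℕ → V := fun n => f^[n] d with hvdef
  have hv0 : v 0 = d := rfl
  have hvs : ∀ n, v (n + 1) = f (v n) := fun n => by
    simp only [hvdef, Function.iterate_succ_apply']
  -- arcs exist along any prefix not yet hitting a
  have good : ∀ n, (∀ m < n, v m ≠ a) → ∀ m < n, (v m, v (m + 1)) ∈ E := by
    intro n
    induction n with
    | zero => intro _ m hm; omega
    | succ n ih =>
      intro hna m hm
      rcases Nat.lt_succ_iff_lt_or_eq.mp hm with h | h
      · exact ih (fun m hm => hna m (hm.trans (Nat.lt_succ_self n))) m h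
      · subst h
        have hex : ∃ y, (v m, y) ∈ E := by
          rcases Nat.eq_zero_or_pos m with h0 | h0
          · subst h0; rw [hv0]; exact ⟨hd_out.choose, hd_out.choose_spec.1⟩
          · have hmin : (v (m - 1), v m) ∈ E := by
              have := ih (fun i hi => hna i (hi.trans (Nat.lt_succ_self _)))
                (m - 1) (by omega)
              rwa [Nat.sub_add_cancel h0] at this
            have hvd : v m ≠ d := fun h => hd_in _ (h ▸ hmin)
            have hva : v m ≠ a := hna m hm
            rcases hdeg (v m) hvd hva with h | h
            · exact absurd hmin (h _).1
            · exact ⟨h.2.choose, h.2.choose_spec.1⟩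
        rw [hvs]; exact hfE _ hex
  have hreach : ∃ n, v n = a := by
    by_contra h
    push_neg at h
    obtain ⟨i, j, hne, heq⟩ := Finite.exists_ne_map_eq_of_infinite v
    rcases hne.lt_or_gt with hij | hij
    · exact hacyclic ⟨j - i, fun m => v (i + m), by omega,
        by simp only; rw [Nat.add_sub_cancel' hij.le]; exact heq.symm,
        fun m hm => by
          have := good (i + m + 1) (fun l _ => h l) (i + m) (Nat.lt_succ_self _)
          simpa [Nat.add_assoc] using this⟩
    · exact hacyclic ⟨i - j, fun m => v (j + m), by omega,
        by simp only; rw [Nat.add_sub_cancel' hij.le]; exact heq,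
        fun m hm => by
          have := good (j + m + 1) (fun l _ => h l) (j + m) (Nat.lt_succ_self _)
          simpa [Nat.add_assoc] using this⟩
  set k : ℕ := Nat.find hreach with hkdef
  have hk : v k = a := Nat.find_spec hreach
  have hmin : ∀ m < k, v m ≠ a := fun m hm => Nat.find_min hreach hm
  have hk1 : 1 ≤ k := by
    rcases Nat.eq_zero_or_pos k with h0 | h0
    · exact absurd (h0 ▸ hk : v 0 = a) (hv0 ▸ hda)
    · exact h0
  have harc : ∀ m < k, (v m, v (m + 1)) ∈ E := good k hmin
  have houtu : ∀ i, i < k → ∃! y, (v i, y) ∈ E := by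
    intro i hi
    rcases Nat.eq_zero_or_pos i with h0 | h0
    · subst h0; rw [hv0]; exact hd_out
    · have hin : (v (i - 1), v i) ∈ E := by
        have := harc (i - 1) (by omega); rwa [Nat.sub_add_cancel h0] at this
      have hvd : v i ≠ d := fun h => hd_in _ (h ▸ hin)
      have hva : v i ≠ a := hmin i hi
      rcases hdeg (v i) hvd hva with h | h
      · exact absurd hin (h _).1
      · exact h.2
  have hinj : ∀ i ≤ k, ∀ j ≤ k, v i = v j → i = j := by
    have key : ∀ i j, i < j → j ≤ k → v i = v j → False := by
      intro i j hij hjk heq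
      exact hacyclic ⟨j - i, fun m => v (i + m), by omega,
        by simp only; rw [Nat.add_sub_cancel' hij.le]; exact heq.symm,
        fun m hm => by
          have := harc (i + m) (by omega)
          simpa [Nat.add_assoc] using this⟩
    intro i hi j hj heq
    rcases lt_trichotomy i j with h | h | h
    · exact (key i j h hj heq).elim
    · exact h
    · exact (key j i h hi heq.symm).elim
  set g : V → V := fun x => if h : ∃ y, (y, x) ∈ E then h.choose else d with hgdef
  have hgE : ∀ x, (∃ y, (y, x) ∈ E) → (g x, x) ∈ E := fun x h => by
    simp only [hgdef, dif_pos h]; exact h.choose_spec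
  have step : ∀ x, (∃ y, (x, y) ∈ E) → (¬ ∃ i < k, x = v i) →
      (g x, x) ∈ E ∧ (∃ y, (g x, y) ∈ E) ∧ (¬ ∃ i < k, g x = v i) := by
    intro x hx hnp
    have hxa : x ≠ a := by rintro rfl; obtain ⟨y, hy⟩ := hx; exact ha_out y hy
    have hxd : x ≠ d := by rintro rfl; exact hnp ⟨0, hk1, hv0.symm⟩
    have hin : ∃ y, (y, x) ∈ E := by
      rcases hdeg x hxd hxa with h | h
      · obtain ⟨y, hy⟩ := hx; exact absurd hy (h y).2
      · exact ⟨h.1.choose, h.1.choose_spec.1⟩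
    have harcg : (g x, x) ∈ E := hgE x hin
    refine ⟨harcg, ⟨x, harcg⟩, ?_⟩
    rintro ⟨i, hi, hgi⟩
    have hu := houtu i hi
    have hx1 : x = v (i + 1) := hu.unique (hgi ▸ harcg) (harc i hi)
    apply hnp
    refine ⟨i + 1, ?_, hx1⟩
    have hik : i + 1 ≤ k := hi
    rcases hik.lt_or_eq with h | h
    · exact h
    · exact absurd (hx1.trans (h ▸ hk)) hxa
  have onpath : ∀ x, (∃ y, (x, y) ∈ E) → ∃ i < k, x = v i := by
    intro x hx
    by_contra hnp
    have chain : ∀ n, (∃ y, (g^[n] x, y) ∈ E) ∧ (¬ ∃ i < k, g^[n] x = v i) ∧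
        (∀ m, n = m + 1 → (g^[n] x, g^[m] x) ∈ E) := by
      intro n
      induction n with
      | zero => exact ⟨hx, hnp, fun m hm => by omega⟩
      | succ n ih =>
        obtain ⟨h1, h2, _⟩ := ih
        obtain ⟨s1, s2, s3⟩ := step _ h1 h2
        refine ⟨?_, ?_, ?_⟩
        · rw [Function.iterate_succ_apply']; exact s2
        · rw [Function.iterate_succ_apply']; exact s3
        · intro m hm
          have hmn : m = n := by omega
          subst hmn
          rw [Function.iterate_succ_apply']; exact s1
    obtain ⟨i, j, hne, heq⟩ := Finite.exists_ne_map_eq_of_infinite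
      (fun n => g^[n] x)
    rcases hne.lt_or_gt with hij | hij
    · refine hacyclic ⟨j - i, fun m => g^[j - m] x, by omega, ?_, ?_⟩
      · simp only
        rw [Nat.sub_sub_self hij.le, Nat.sub_zero]
        exact heq
      · intro m hm
        have h1 : j - m = (j - (m + 1)) + 1 := by omega
        exact (chain (j - m)).2.2 (j - (m + 1)) h1
    · refine hacyclic ⟨i - j, fun m => g^[i - m] x, by omega, ?_, ?_⟩
      · simp only
        rw [Nat.sub_sub_self hij.le, Nat.sub_zero]
        exact heq.symm
      · intro m hm
        have h1 : i - m = (i - (m + 1)) + 1 := by omega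
        exact (chain (i - m)).2.2 (i - (m + 1)) h1
  refine ⟨k, v, hk1, hv0, hk, hinj, ?_⟩
  ext ⟨x, y⟩
  simp only [Set.mem_setOf_eq, Prod.mk.injEq]
  constructor
  · intro hxy
    obtain ⟨i, hi, rfl⟩ := onpath x ⟨y, hxy⟩
    exact ⟨i, hi, rfl, (houtu i hi).unique hxy (harc i hi)⟩
  · rintro ⟨i, hi, rfl, rfl⟩
    exact harc i hi
end
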